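/- The q-binomial theorem holds: for |z| < 1 and |q| < 1, ∑_{k=0}^{∞} (a;q)_k z^k / (q;q)_k = (az;q)_∞ / (z;q)_∞. -/

import Mathlib

/-!
Write `F(w) = ∑ (a;q)_k / (q;q)_k w^k`. The recurrence for its coefficients gives the functional
equation `(1 - w) F(w) = (1 - a w) F(q w)`, which iterates to
`(z;q)_n F(z) = (az;q)_n F(q^n z)`. As `n → ∞`, `F(q^n z) → F(0) = 1` by dominated convergence,
while the finite products converge to the infinite ones; `(z;q)_∞ ≠ 0` since `|z| < 1`.
-/

open Finset Complex

noncomputable def qPoch (a q : ℂ) (n : ℕ) : ℂ :=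
  ∏ j ∈ Finset.range n, (1 - a * q ^ j)

noncomputable def qBinom (q : ℂ) (n k : ℕ) : ℂ :=
  qPoch q q n / (qPoch q q k * qPoch q q (n - k))

noncomputable def cauchyP (q x y : ℂ) (n : ℕ) : ℂ :=
  ∏ j ∈ Finset.range n, (x - q ^ j * y)

noncomputable def Fpoly (q x y z : ℂ) (n : ℕ) : ℂ :=
  (-1) ^ n * q ^ (-((n * (n - 1) / 2 : ℕ) : ℤ)) *
    ∑ k ∈ Finset.range (n + 1),
      qBinom q n k * (-1) ^ k * q ^ (k * (k - 1) / 2) * cauchyP q y x (n - k) * z ^ k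

noncomputable def Pq (q ξ y ζ z : ℂ) (n : ℕ) : ℂ :=
  ∑ k ∈ Finset.range (n + 1),
    qBinom q n k * q ^ (k * (k - 1) / 2) * cauchyP q ξ y (n - k) * (-1) ^ k * cauchyP q ζ z k

noncomputable def psiH (q a x y : ℂ) (n : ℕ) : ℂ := Fpoly q x (a * x) y n

noncomputable def qExp (q z : ℂ) : ℂ := ∑' k : ℕ, z ^ k / qPoch q q k

noncomputable def qExpE (q z : ℂ) : ℂ := ∑' k : ℕ, q ^ (k * (k - 1) / 2) * z ^ k / qPoch q q k

noncomputable def thetaOp (q : ℂ) (g : ℂ → ℂ → ℂ) : ℂ → ℂ → ℂ :=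
  fun x y => (g (q⁻¹ * x) y - g x (q * y)) / (q⁻¹ * x - y)
open Filter Topology

theorem one_sub_mul_tsum_mul_pow {R : Type*} [CommRing R] [TopologicalSpace R]
    [IsTopologicalRing R] [T2Space R] {d : ℕ → R} {w : R} (b : R)
    (h : Summable fun k => d k * w ^ k) :
    (1 - b * w) * ∑' k, d k * w ^ k = d 0 + ∑' k, (d (k + 1) - b * d k) * w ^ (k + 1) := by
  have hshift : Summable fun k => d (k + 1) * w ^ (k + 1) := (summable_nat_add_iff 1).mpr h
  have hsplit : ∑' k, (d (k + 1) - b * d k) * w ^ (k + 1)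
      = ∑' k, d (k + 1) * w ^ (k + 1) - b * w * ∑' k, d k * w ^ k := by
    rw [← h.tsum_mul_left, ← hshift.tsum_sub (h.mul_left _)]
    congr 1 with k
    ring
  rw [hsplit, h.tsum_eq_zero_add]
  ring

theorem norm_pow_mul_lt_one {𝕜 : Type*} [NormedDivisionRing 𝕜] {q z : 𝕜} (hq : ‖q‖ ≤ 1) (hz : ‖z‖ < 1) (n : ℕ) :
    ‖q ^ n * z‖ < 1 := by
  rw [norm_mul, norm_pow]
  exact mul_lt_one_of_nonneg_of_lt_one_right (pow_le_one₀ (norm_nonneg q) hq) (norm_nonneg z) hz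

theorem one_sub_ne_zero_of_norm_lt_one {R : Type*} [NormedRing R] [NormOneClass R] {w : R} (hw : ‖w‖ < 1) : 1 - w ≠ 0 := by
  rw [sub_ne_zero]
  rintro rfl
  simp at hw

theorem qPoch_succ (a q : ℂ) (n : ℕ) : qPoch a q (n + 1) = qPoch a q n * (1 - a * q ^ n) :=
  prod_range_succ _ n

section QBinomialSeries

variable {q : ℂ}

noncomputable def qBinomialCoeff (a q : ℂ) (k : ℕ) : ℂ := qPoch a q k / qPoch q q k

noncomputable def qBinomialSeries (a q w : ℂ) : ℂ := ∑' k, qBinomialCoeff a q k * w ^ k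

theorem qBinomialCoeff_zero (a q : ℂ) : qBinomialCoeff a q 0 = 1 := by
  simp [qBinomialCoeff, qPoch]

theorem qBinomialCoeff_succ (a q : ℂ) (k : ℕ) :
    qBinomialCoeff a q (k + 1) = qBinomialCoeff a q k * ((1 - a * q ^ k) / (1 - q ^ (k + 1))) := by
  rw [qBinomialCoeff, qBinomialCoeff, qPoch_succ, qPoch_succ, ← pow_succ', mul_div_mul_comm]

theorem qBinomialCoeff_succ_mul (hq : ‖q‖ < 1) (a : ℂ) (k : ℕ) :
    qBinomialCoeff a q (k + 1) * (1 - q ^ (k + 1)) = qBinomialCoeff a q k * (1 - a * q ^ k) := by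
  have hk : 1 - q ^ (k + 1) ≠ 0 :=
    one_sub_ne_zero_of_norm_lt_one (by simpa [pow_succ] using norm_pow_mul_lt_one hq.le hq k)
  rw [qBinomialCoeff_succ, mul_assoc, div_mul_cancel₀ _ hk]

theorem tendsto_qBinomialCoeff_ratio (hq : ‖q‖ < 1) (a : ℂ) :
    Tendsto (fun k : ℕ => (1 - a * q ^ k) / (1 - q ^ (k + 1))) atTop (𝓝 1) := by
  have hpow : Tendsto (fun k : ℕ => q ^ k) atTop (𝓝 0) :=
    tendsto_pow_atTop_nhds_zero_of_norm_lt_one hq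
  have hpow_succ : Tendsto (fun k : ℕ => q ^ (k + 1)) atTop (𝓝 0) :=
    (tendsto_add_atTop_iff_nat 1).mpr hpow
  have hlim := ((tendsto_const_nhds (x := (1 : ℂ))).sub (hpow.const_mul a)).div
    ((tendsto_const_nhds (x := (1 : ℂ))).sub hpow_succ) (by norm_num)
  simp only [mul_zero, sub_zero, div_one] at hlim
  exact hlim

theorem summable_norm_qBinomialCoeff_mul_pow (hq : ‖q‖ < 1) (a : ℂ) {r : ℝ} (hr₀ : 0 ≤ r)
    (hr : r < 1) : Summable fun k => ‖qBinomialCoeff a q k‖ * r ^ k := by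
  refine summable_of_ratio_norm_eventually_le (r := (1 + r) / 2) (by linarith) ?_
  have hratio := (tendsto_norm.comp (tendsto_qBinomialCoeff_ratio hq a)).mul_const r
  rw [norm_one, one_mul] at hratio
  filter_upwards [hratio.eventually_le_const (by linarith : r < (1 + r) / 2)] with k hk
  have hnorm (n : ℕ) : ‖‖qBinomialCoeff a q n‖ * r ^ n‖ = ‖qBinomialCoeff a q n‖ * r ^ n :=
    Real.norm_of_nonneg (by positivity)
  rw [hnorm, hnorm, qBinomialCoeff_succ, norm_mul, pow_succ]
  calc ‖qBinomialCoeff a q k‖ * ‖(1 - a * q ^ k) / (1 - q ^ (k + 1))‖ * (r ^ k * r)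
      = ‖(1 - a * q ^ k) / (1 - q ^ (k + 1))‖ * r * (‖qBinomialCoeff a q k‖ * r ^ k) := by ring
    _ ≤ (1 + r) / 2 * (‖qBinomialCoeff a q k‖ * r ^ k) := by gcongr; exact hk

theorem summable_qBinomialCoeff_mul_pow (hq : ‖q‖ < 1) (a : ℂ) {w : ℂ} (hw : ‖w‖ < 1) :
    Summable fun k => qBinomialCoeff a q k * w ^ k :=
  .of_norm <| by
    simpa [norm_mul, norm_pow] using summable_norm_qBinomialCoeff_mul_pow hq a (norm_nonneg w) hw

theorem one_sub_mul_qBinomialSeries (hq : ‖q‖ < 1) (a : ℂ) {w : ℂ} (hw : ‖w‖ < 1) :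
    (1 - w) * qBinomialSeries a q w = (1 - a * w) * qBinomialSeries a q (q * w) := by
  have hscaled : Summable fun k => qBinomialCoeff a q k * q ^ k * w ^ k := by
    simpa [mul_pow, mul_assoc] using summable_qBinomialCoeff_mul_pow hq a (w := q * w)
      (by simpa using norm_pow_mul_lt_one hq.le hw 1)
  have hleft := one_sub_mul_tsum_mul_pow 1 (summable_qBinomialCoeff_mul_pow hq a hw)
  rw [one_mul] at hleft
  simp only [qBinomialSeries, mul_pow, ← mul_assoc]
  rw [hleft, one_sub_mul_tsum_mul_pow a hscaled, qBinomialCoeff_zero, pow_zero, mul_one]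
  congr 1
  refine tsum_congr fun k => ?_
  linear_combination w ^ (k + 1) * qBinomialCoeff_succ_mul hq a k

theorem qBinomialSeries_mul_qPoch (hq : ‖q‖ < 1) (a : ℂ) {z : ℂ} (hz : ‖z‖ < 1) (n : ℕ) :
    qBinomialSeries a q z * qPoch z q n = qPoch (a * z) q n * qBinomialSeries a q (q ^ n * z) := by
  induction n with
  | zero => simp [qPoch]
  | succ n ih =>
    have hstep := one_sub_mul_qBinomialSeries hq a (norm_pow_mul_lt_one hq.le hz n)
    rw [qPoch_succ, qPoch_succ, pow_succ', mul_assoc q]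
    linear_combination (1 - z * q ^ n) * ih + qPoch (a * z) q n * hstep

theorem tendsto_qBinomialSeries_pow_mul (hq : ‖q‖ < 1) (a : ℂ) {z : ℂ} (hz : ‖z‖ < 1) :
    Tendsto (fun n : ℕ => qBinomialSeries a q (q ^ n * z)) atTop (𝓝 1) := by
  have hterm (k : ℕ) : Tendsto (fun n : ℕ => qBinomialCoeff a q k * (q ^ n * z) ^ k) atTop
      (𝓝 (qBinomialCoeff a q k * 0 ^ k)) := by
    simpa using (((tendsto_pow_atTop_nhds_zero_of_norm_lt_one hq).mul_const z).pow k).const_mul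
      (qBinomialCoeff a q k)
  have hbound : ∀ᶠ n : ℕ in atTop, ∀ k,
      ‖qBinomialCoeff a q k * (q ^ n * z) ^ k‖ ≤ ‖qBinomialCoeff a q k‖ * ‖z‖ ^ k := by
    refine Eventually.of_forall fun n k => ?_
    rw [norm_mul, norm_pow, norm_mul, norm_pow]
    gcongr
    exact mul_le_of_le_one_left (norm_nonneg z) (pow_le_one₀ (norm_nonneg q) hq.le)
  have hlim := tendsto_tsum_of_dominated_convergence
    (summable_norm_qBinomialCoeff_mul_pow hq a (norm_nonneg z) hz) hterm hbound
  rwa [tsum_eq_single 0 fun k hk => by simp [zero_pow hk], pow_zero, mul_one,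
    qBinomialCoeff_zero] at hlim

end QBinomialSeries

section InfiniteProduct

variable {q : ℂ}

theorem summable_norm_mul_pow (hq : ‖q‖ < 1) (c : ℂ) : Summable fun j : ℕ => ‖c * q ^ j‖ := by
  simpa [norm_mul, norm_pow] using (summable_geometric_of_lt_one (norm_nonneg q) hq).mul_left ‖c‖

theorem multipliable_one_sub_mul_pow (hq : ‖q‖ < 1) (c : ℂ) :
    Multipliable fun j : ℕ => 1 - c * q ^ j := by
  simpa [sub_eq_add_neg] using
    multipliable_one_add_of_summable (f := fun j : ℕ => -(c * q ^ j))
      (by simpa using summable_norm_mul_pow hq c)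

theorem tprod_one_sub_mul_pow_ne_zero (hq : ‖q‖ < 1) {c : ℂ} (hc : ‖c‖ < 1) :
    ∏' j : ℕ, (1 - c * q ^ j) ≠ 0 := by
  have hfactor (j : ℕ) : 1 + -(c * q ^ j) ≠ 0 := by
    rw [← sub_eq_add_neg, mul_comm]
    exact one_sub_ne_zero_of_norm_lt_one (norm_pow_mul_lt_one hq.le hc j)
  simpa [sub_eq_add_neg] using
    tprod_one_add_ne_zero_of_summable hfactor (by simpa using summable_norm_mul_pow hq c)

theorem tendsto_qPoch_atTop (hq : ‖q‖ < 1) (c : ℂ) :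
    Tendsto (qPoch c q) atTop (𝓝 (∏' j : ℕ, (1 - c * q ^ j))) :=
  (multipliable_one_sub_mul_pow hq c).hasProd.tendsto_prod_nat

end InfiniteProduct

theorem q_binomial_theorem (q a z : ℂ) (hq : ‖q‖ < 1) (hz : ‖z‖ < 1) :
    HasSum (fun k : ℕ => qPoch a q k * z ^ k / qPoch q q k)
      ((∏' j : ℕ, (1 - a * z * q ^ j)) / ∏' j : ℕ, (1 - z * q ^ j)) := by
  have hleft := (tendsto_qPoch_atTop hq z).const_mul (qBinomialSeries a q z)
  have hright := (tendsto_qPoch_atTop hq (a * z)).mul (tendsto_qBinomialSeries_pow_mul hq a hz)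
  have hvalue := tendsto_nhds_unique (hleft.congr (qBinomialSeries_mul_qPoch hq a hz)) hright
  rw [mul_one, ← eq_div_iff (tprod_one_sub_mul_pow_ne_zero hq hz)] at hvalue
  rw [← hvalue]
  simpa only [qBinomialSeries, qBinomialCoeff, div_mul_eq_mul_div] using
    (summable_qBinomialCoeff_mul_pow hq a hz).hasSum
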